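/- Let k be a field, q ∈ k with q ≠ 0, and η ∈ {0, 1} ⊆ k. Let R : k⁴ → k⁴ be the linear map given (with respect to the standard basis of k² ⊗ k² ≅ k⁴) by the matrix with rows (1,0,0,0), (0,1,0,0), (0,1−q,q,0), (η,0,0,−q). Then R satisfies the quantum Yang–Baxter equation R¹² ∘ R¹³ ∘ R²³ = R²³ ∘ R¹³ ∘ R¹² on k² ⊗ k² ⊗ k². -/

import Mathlib

open TensorProduct

/-- The twist map `τ : V ⊗ V → V ⊗ V`, `v ⊗ w ↦ w ⊗ v`. -/
noncomputable def twist (k V : Type*) [Field k] [AddCommGroup V] [Module k V] :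
    V ⊗[k] V →ₗ[k] V ⊗[k] V := (TensorProduct.comm k V V).toLinearMap

/-- `R¹² = R ⊗ I` acting on `(V ⊗ V) ⊗ V`. -/
noncomputable def r12 {k V : Type*} [Field k] [AddCommGroup V] [Module k V]
    (R : V ⊗[k] V →ₗ[k] V ⊗[k] V) :
    (V ⊗[k] V) ⊗[k] V →ₗ[k] (V ⊗[k] V) ⊗[k] V :=
  TensorProduct.map R LinearMap.id

/-- `R²³ = I ⊗ R` acting on `(V ⊗ V) ⊗ V`. -/
noncomputable def r23 {k V : Type*} [Field k] [AddCommGroup V] [Module k V]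
    (R : V ⊗[k] V →ₗ[k] V ⊗[k] V) :
    (V ⊗[k] V) ⊗[k] V →ₗ[k] (V ⊗[k] V) ⊗[k] V :=
  (TensorProduct.assoc k V V V).symm.toLinearMap ∘ₗ
    TensorProduct.map LinearMap.id R ∘ₗ (TensorProduct.assoc k V V V).toLinearMap

/-- `I ⊗ τ` acting on `(V ⊗ V) ⊗ V`. -/
noncomputable def iTauI (k V : Type*) [Field k] [AddCommGroup V] [Module k V] :
    (V ⊗[k] V) ⊗[k] V →ₗ[k] (V ⊗[k] V) ⊗[k] V :=
  (TensorProduct.assoc k V V V).symm.toLinearMap ∘ₗ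
    TensorProduct.map LinearMap.id (twist k V) ∘ₗ (TensorProduct.assoc k V V V).toLinearMap

/-- `R¹³ = (I ⊗ τ)(R ⊗ I)(I ⊗ τ)` acting on `(V ⊗ V) ⊗ V`. -/
noncomputable def r13 {k V : Type*} [Field k] [AddCommGroup V] [Module k V]
    (R : V ⊗[k] V →ₗ[k] V ⊗[k] V) :
    (V ⊗[k] V) ⊗[k] V →ₗ[k] (V ⊗[k] V) ⊗[k] V :=
  iTauI k V ∘ₗ r12 R ∘ₗ iTauI k V

/-- The standard basis `e₁, e₂` of `k²`. -/
noncomputable def stdB (k : Type*) [Field k] : Module.Basis (Fin 2) k (Fin 2 → k) :=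
  Pi.basisFun k (Fin 2)

section TensorLegs

variable {k V : Type*} [Field k] [AddCommGroup V] [Module k V]
  (R : V ⊗[k] V →ₗ[k] V ⊗[k] V) (x y z : V)

theorem iTauI_tmul : iTauI k V ((x ⊗ₜ y) ⊗ₜ z) = (x ⊗ₜ z) ⊗ₜ y := rfl

theorem r12_tmul : r12 R ((x ⊗ₜ y) ⊗ₜ z) = R (x ⊗ₜ y) ⊗ₜ z := rfl

theorem r23_tmul :
    r23 R ((x ⊗ₜ y) ⊗ₜ z) = (TensorProduct.assoc k V V V).symm (x ⊗ₜ R (y ⊗ₜ z)) := rfl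

theorem r13_tmul : r13 R ((x ⊗ₜ y) ⊗ₜ z) = iTauI k V (R (x ⊗ₜ z) ⊗ₜ y) := rfl

end TensorLegs

theorem matrix_solution_qybe_general {k : Type*} [Field k] (q : k)
    (η : k)
    (R : (Fin 2 → k) ⊗[k] (Fin 2 → k) →ₗ[k] (Fin 2 → k) ⊗[k] (Fin 2 → k))
    (h00 : R (stdB k 0 ⊗ₜ[k] stdB k 0) = stdB k 0 ⊗ₜ[k] stdB k 0 + η • (stdB k 1 ⊗ₜ[k] stdB k 1))
    (h01 : R (stdB k 0 ⊗ₜ[k] stdB k 1) = stdB k 0 ⊗ₜ[k] stdB k 1 + (1 - q) • (stdB k 1 ⊗ₜ[k] stdB k 0))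
    (h10 : R (stdB k 1 ⊗ₜ[k] stdB k 0) = q • (stdB k 1 ⊗ₜ[k] stdB k 0))
    (h11 : R (stdB k 1 ⊗ₜ[k] stdB k 1) = (-q) • (stdB k 1 ⊗ₜ[k] stdB k 1)) :
    r12 R ∘ₗ r13 R ∘ₗ r23 R = r23 R ∘ₗ r13 R ∘ₗ r12 R := by
  refine Module.Basis.ext (((stdB k).tensorProduct (stdB k)).tensorProduct (stdB k)) ?_
  rintro ⟨⟨i, j⟩, l⟩
  fin_cases i <;> fin_cases j <;> fin_cases l <;>
    simp only [Module.Basis.tensorProduct_apply, LinearMap.comp_apply, Fin.zero_eta, Fin.mk_one,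
      r12_tmul, r13_tmul, r23_tmul, iTauI_tmul, h00, h01, h10, h11, TensorProduct.assoc_symm_tmul,
      TensorProduct.tmul_add, TensorProduct.add_tmul, TensorProduct.tmul_smul,
      ← TensorProduct.smul_tmul', map_add, map_smul] <;>
    module

/-- Let `q ≠ 0` and `η ∈ {0, 1}`.  The linear map `R` on `k² ⊗ k²` given, with respect to
the ordered basis `e₁⊗e₁, e₁⊗e₂, e₂⊗e₁, e₂⊗e₂`, by the matrix with rows
`(1,0,0,0), (0,1,0,0), (0,1−q,q,0), (η,0,0,−q)` satisfies the quantum Yang–Baxter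
equation `R¹² ∘ R¹³ ∘ R²³ = R²³ ∘ R¹³ ∘ R¹²`. -/
theorem matrix_solution_qybe {k : Type*} [Field k] (q : k) (hq : q ≠ 0)
    (η : k) (hη : η ∈ ({0, 1} : Set k))
    (R : (Fin 2 → k) ⊗[k] (Fin 2 → k) →ₗ[k] (Fin 2 → k) ⊗[k] (Fin 2 → k))
    (h00 : R (stdB k 0 ⊗ₜ[k] stdB k 0) = stdB k 0 ⊗ₜ[k] stdB k 0 + η • (stdB k 1 ⊗ₜ[k] stdB k 1))
    (h01 : R (stdB k 0 ⊗ₜ[k] stdB k 1) = stdB k 0 ⊗ₜ[k] stdB k 1 + (1 - q) • (stdB k 1 ⊗ₜ[k] stdB k 0))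
    (h10 : R (stdB k 1 ⊗ₜ[k] stdB k 0) = q • (stdB k 1 ⊗ₜ[k] stdB k 0))
    (h11 : R (stdB k 1 ⊗ₜ[k] stdB k 1) = (-q) • (stdB k 1 ⊗ₜ[k] stdB k 1)) :
    r12 R ∘ₗ r13 R ∘ₗ r23 R = r23 R ∘ₗ r13 R ∘ₗ r12 R :=
  matrix_solution_qybe_general q η R h00 h01 h10 h11
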